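/- For all α, β ∈ (0,1), CoVaR_{α,β}(Y|X) ≤ CoVaR_{α,β}(Y'|X') for all α,β is equivalent to the statement that P(Y > VaR_β(Y) | X > VaR_α(X)) ≤ P(Y' > VaR_β(Y') | X' > VaR_α(X')) for all α, β ∈ (0,1), assuming F_X, F_{X'}, F_Y, F_{Y'} are continuous and strictly increasing and F_Y = F_{Y'}. -/

import Mathlib

open MeasureTheory Set

/-- Generalized inverse F^←(p) = inf {x : F x ≥ p}. -/
noncomputable def qf (F : ℝ → ℝ) (p : ℝ) : ℝ := sInf {x | p ≤ F x}

/-- Distribution function of a random variable. -/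
noncomputable def rvCdf {Ω : Type*} [MeasurableSpace Ω] (μ : Measure Ω) (X : Ω → ℝ) (x : ℝ) : ℝ :=
  (μ {ω | X ω ≤ x}).toReal

/-- CoVaR_{α,β}(Y|X): β-quantile of the conditional law of Y given {X ≥ VaR_α(X)}. -/
noncomputable def covar {Ω : Type*} [MeasurableSpace Ω] (μ : Measure Ω) (X Y : Ω → ℝ)
    (α β : ℝ) : ℝ :=
  qf (fun y => (μ ({ω | Y ω ≤ y} ∩ {ω | qf (rvCdf μ X) α ≤ X ω})).toReal /
        (μ {ω | qf (rvCdf μ X) α ≤ X ω}).toReal) β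

/-- Conditional exceedance probability P(Y > VaR_β(Y) | X > VaR_α(X)). -/
noncomputable def condExceedProb {Ω : Type*} [MeasurableSpace Ω] (μ : Measure Ω)
    (X Y : Ω → ℝ) (α β : ℝ) : ℝ :=
  (μ ({ω | qf (rvCdf μ Y) β < Y ω} ∩ {ω | qf (rvCdf μ X) α < X ω})).toReal /
    (μ {ω | qf (rvCdf μ X) α < X ω}).toReal

/-! Conditioning on `{X ≥ VaR_α X}` gives a law `P_α` of `Y` whose quantile function is
`CoVaR_{α,·}(Y|X)`. Continuity of `F_X` makes `{X ≥ VaR_α X}` and `{X > VaR_α X}` differ by a null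
set, so the conditional exceedance probability is `1 - F_{P_α}(VaR_β Y)`. For right-continuous
distribution functions, `F^←(γ) ≤ y ↔ γ ≤ F y` turns the pointwise order of quantile functions
into the reverse pointwise order of distribution functions, and since `F_Y = F_{Y'}` is strictly
increasing, `VaR_β Y` runs through all of `ℝ` as `β` runs through `(0,1)`. -/

open ProbabilityTheory Filter

section Quantile

variable (P : Measure ℝ) {γ : ℝ}

lemma nonempty_setOf_le_cdf (hγ : γ < 1) : {x | γ ≤ cdf P x}.Nonempty :=
  ((tendsto_cdf_atTop P).eventually_const_lt hγ).exists.imp fun _ h => h.le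

lemma bddBelow_setOf_le_cdf (hγ : 0 < γ) : BddBelow {x | γ ≤ cdf P x} := by
  obtain ⟨a, ha⟩ := eventually_atBot.1 ((tendsto_cdf_atBot P).eventually_lt_const hγ)
  exact ⟨a, fun x hx => le_of_not_ge fun hxa => (ha x hxa).not_ge hx⟩

lemma le_cdf_qf (hγ : γ ∈ Ioo 0 1) : γ ≤ cdf P (qf (cdf P) γ) := by
  refine ge_of_tendsto ((cdf P).right_continuous _ |>.mono Ioi_subset_Ici_self)
    (eventually_nhdsWithin_of_forall fun x hx => ?_)
  obtain ⟨y, hy, hyx⟩ := exists_lt_of_csInf_lt (nonempty_setOf_le_cdf P hγ.2) hx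
  exact hy.trans (monotone_cdf P hyx.le)

lemma qf_cdf_le_iff (hγ : γ ∈ Ioo 0 1) (y : ℝ) : qf (cdf P) γ ≤ y ↔ γ ≤ cdf P y :=
  ⟨fun h => (le_cdf_qf P hγ).trans (monotone_cdf P h),
    fun h => csInf_le (bddBelow_setOf_le_cdf P hγ.1) h⟩

lemma cdf_qf_of_continuous (hc : Continuous (cdf P)) (hγ : γ ∈ Ioo 0 1) :
    cdf P (qf (cdf P) γ) = γ := by
  refine le_antisymm ?_ (le_cdf_qf P hγ)
  refine le_of_tendsto (hc.continuousWithinAt (s := Iio (qf (cdf P) γ)))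
    (eventually_nhdsWithin_of_forall fun x hx => ?_)
  exact (lt_of_not_ge fun h => hx.not_ge ((qf_cdf_le_iff P hγ x).2 h)).le

theorem forall_qf_cdf_le_iff_forall_cdf_le (P' : Measure ℝ) :
    (∀ γ ∈ Ioo (0 : ℝ) 1, qf (cdf P) γ ≤ qf (cdf P') γ) ↔ ∀ y, cdf P' y ≤ cdf P y := by
  refine ⟨fun h y => le_of_forall_lt_imp_le_of_dense fun γ hγ => ?_,
    fun h γ hγ => (qf_cdf_le_iff P hγ _).2 ((le_cdf_qf P' hγ).trans (h _))⟩
  rcases le_or_gt γ 0 with hγ0 | hγ0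
  · exact hγ0.trans (cdf_nonneg P y)
  have hγ' : γ ∈ Ioo 0 1 := ⟨hγ0, hγ.trans_le (cdf_le_one P' y)⟩
  exact (qf_cdf_le_iff P hγ' y).1 ((h γ hγ').trans ((qf_cdf_le_iff P' hγ' y).2 hγ.le))

end Quantile

lemma StrictMono.qf_apply {F : ℝ → ℝ} (hF : StrictMono F) (x : ℝ) : qf F (F x) = x := by
  simp only [qf, hF.le_iff_le]
  exact csInf_Ici

section RandomVariable

variable {Ω : Type*} [MeasurableSpace Ω] (μ : Measure Ω) [IsProbabilityMeasure μ]
  {X Y : Ω → ℝ} {α : ℝ}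

lemma rvCdf_eq_cdf_map (hX : Measurable X) : rvCdf μ X = cdf (μ.map X) := by
  have := Measure.isProbabilityMeasure_map (μ := μ) hX.aemeasurable
  ext x
  rw [cdf_eq_real, measureReal_def, Measure.map_apply hX measurableSet_Iic]
  rfl

lemma rvCdf_mem_Ioo (hF : StrictMono (rvCdf μ Y)) (y : ℝ) : rvCdf μ Y y ∈ Ioo 0 1 :=
  ⟨ENNReal.toReal_nonneg.trans_lt (hF (sub_one_lt y)),
    (hF (lt_add_one y)).trans_le measureReal_le_one⟩

lemma forall_qf_rvCdf_iff (hF : StrictMono (rvCdf μ Y)) {p : ℝ → Prop} :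
    (∀ β ∈ Ioo (0 : ℝ) 1, p (qf (rvCdf μ Y) β)) ↔ ∀ y, p y :=
  ⟨fun h y => hF.qf_apply y ▸ h _ (rvCdf_mem_Ioo μ hF y), fun h _ _ => h _⟩

lemma rvCdf_qf (hX : Measurable X) (hc : Continuous (rvCdf μ X)) (hα : α ∈ Ioo 0 1) :
    rvCdf μ X (qf (rvCdf μ X) α) = α := by
  rw [rvCdf_eq_cdf_map μ hX] at hc ⊢
  exact cdf_qf_of_continuous _ hc hα

lemma measure_setOf_qf_lt_ne_zero (hX : Measurable X) (hc : Continuous (rvCdf μ X))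
    (hα : α ∈ Ioo 0 1) : μ {ω | qf (rvCdf μ X) α < X ω} ≠ 0 := by
  have h : μ.real {ω | qf (rvCdf μ X) α < X ω} = 1 - α :=
    calc _ = 1 - μ.real (X ⁻¹' Iic (qf (rvCdf μ X) α)) := by
          rw [← probReal_compl_eq_one_sub (hX measurableSet_Iic)]
          congr 1
          ext ω
          simp
      _ = 1 - α := congrArg (1 - ·) (rvCdf_qf μ hX hc hα)
  intro h0
  rw [measureReal_def, h0, ENNReal.toReal_zero] at h
  linarith [hα.2]

lemma setOf_le_ae_eq_setOf_lt (hX : Measurable X) (hc : Continuous (rvCdf μ X)) (q : ℝ) :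
    {ω | q ≤ X ω} =ᵐ[μ] {ω | q < X ω} := by
  have := Measure.isProbabilityMeasure_map (μ := μ) hX.aemeasurable
  rw [rvCdf_eq_cdf_map μ hX] at hc
  have hatom : μ.map X {q} = 0 := by
    rw [← measure_cdf (μ.map X), StieltjesFunction.measure_singleton,
      ((monotone_cdf _).continuousWithinAt_Iio_iff_leftLim_eq).1 hc.continuousWithinAt,
      sub_self, ENNReal.ofReal_zero]
  exact ((hX.quasiMeasurePreserving μ).preimage_ae_eq (Ioi_ae_eq_Ici' hatom)).symm

end RandomVariable

section CondTailLaw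

variable {Ω : Type*} [MeasurableSpace Ω]

lemma cond_congr_set {μ : Measure Ω} {s t : Set Ω} (h : s =ᵐ[μ] t) : μ[|s] = μ[|t] := by
  simp only [ProbabilityTheory.cond, measure_congr h, Measure.restrict_congr_set h]

lemma cond_real_apply (μ : Measure Ω) {s : Set Ω} (hs : MeasurableSet s) (t : Set Ω) :
    μ[|s].real t = μ.real (s ∩ t) / μ.real s := by
  rw [measureReal_def, cond_apply hs, ENNReal.toReal_mul, ENNReal.toReal_inv, div_eq_inv_mul]
  rfl

noncomputable def condTailLaw (μ : Measure Ω) (X Y : Ω → ℝ) (α : ℝ) : Measure ℝ :=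
  (μ[|{ω | qf (rvCdf μ X) α ≤ X ω}]).map Y

variable (μ : Measure Ω) [IsProbabilityMeasure μ] {X Y : Ω → ℝ} {α : ℝ}

lemma isProbabilityMeasure_condTailLaw (hX : Measurable X) (hY : Measurable Y)
    (hc : Continuous (rvCdf μ X)) (hα : α ∈ Ioo 0 1) :
    IsProbabilityMeasure (condTailLaw μ X Y α) := by
  have := cond_isProbabilityMeasure (μ := μ) (s := {ω | qf (rvCdf μ X) α ≤ X ω})
    (by rw [measure_congr (setOf_le_ae_eq_setOf_lt μ hX hc _)]
        exact measure_setOf_qf_lt_ne_zero μ hX hc hα)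
  exact Measure.isProbabilityMeasure_map hY.aemeasurable

lemma covar_eq_qf_cdf_condTailLaw (hX : Measurable X) (hY : Measurable Y)
    (hc : Continuous (rvCdf μ X)) (hα : α ∈ Ioo 0 1) (β : ℝ) :
    covar μ X Y α β = qf (cdf (condTailLaw μ X Y α)) β := by
  have := isProbabilityMeasure_condTailLaw μ hX hY hc hα
  unfold covar
  congr 1
  funext y
  rw [cdf_eq_real, condTailLaw, map_measureReal_apply hY measurableSet_Iic,
    cond_real_apply μ (measurableSet_le measurable_const hX), inter_comm]
  rfl

lemma condExceedProb_eq_one_sub_cdf_condTailLaw (hX : Measurable X) (hY : Measurable Y)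
    (hc : Continuous (rvCdf μ X)) (hα : α ∈ Ioo 0 1) (β : ℝ) :
    condExceedProb μ X Y α β = 1 - cdf (condTailLaw μ X Y α) (qf (rvCdf μ Y) β) := by
  have := isProbabilityMeasure_condTailLaw μ hX hY hc hα
  rw [cdf_eq_real, ← probReal_compl_eq_one_sub measurableSet_Iic, compl_Iic, condTailLaw,
    map_measureReal_apply hY measurableSet_Ioi,
    cond_congr_set (setOf_le_ae_eq_setOf_lt μ hX hc _),
    cond_real_apply μ (measurableSet_lt measurable_const hX), inter_comm]
  rfl

end CondTailLaw

theorem covar_ordering_iff_cond_exceed_ordering_general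
    {Ω Ω' : Type*} [MeasurableSpace Ω] [MeasurableSpace Ω']
    (μ : Measure Ω) (ν : Measure Ω') [IsProbabilityMeasure μ] [IsProbabilityMeasure ν]
    (X Y : Ω → ℝ) (X' Y' : Ω' → ℝ)
    (hX : Measurable X) (hY : Measurable Y) (hX' : Measurable X') (hY' : Measurable Y')
    (hFXc : Continuous (rvCdf μ X))
    (hFX'c : Continuous (rvCdf ν X'))
    (hFYs : StrictMono (rvCdf μ Y))
    (hYY' : rvCdf μ Y = rvCdf ν Y') :
    (∀ α ∈ Ioo (0:ℝ) 1, ∀ β ∈ Ioo (0:ℝ) 1, covar μ X Y α β ≤ covar ν X' Y' α β)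
      ↔ (∀ α ∈ Ioo (0:ℝ) 1, ∀ β ∈ Ioo (0:ℝ) 1,
          condExceedProb μ X Y α β ≤ condExceedProb ν X' Y' α β) := by
  refine forall₂_congr fun α hα => ?_
  calc (∀ β ∈ Ioo (0:ℝ) 1, covar μ X Y α β ≤ covar ν X' Y' α β)
      ↔ ∀ y, cdf (condTailLaw ν X' Y' α) y ≤ cdf (condTailLaw μ X Y α) y := by
        simp only [covar_eq_qf_cdf_condTailLaw μ hX hY hFXc hα,
          covar_eq_qf_cdf_condTailLaw ν hX' hY' hFX'c hα]
        exact forall_qf_cdf_le_iff_forall_cdf_le _ _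
    _ ↔ ∀ β ∈ Ioo (0:ℝ) 1, cdf (condTailLaw ν X' Y' α) (qf (rvCdf μ Y) β)
          ≤ cdf (condTailLaw μ X Y α) (qf (rvCdf μ Y) β) := (forall_qf_rvCdf_iff μ hFYs).symm
    _ ↔ _ := by
        simp only [condExceedProb_eq_one_sub_cdf_condTailLaw μ hX hY hFXc hα,
          condExceedProb_eq_one_sub_cdf_condTailLaw ν hX' hY' hFX'c hα, ← hYY',
          sub_le_sub_iff_left]

/-- with continuous strictly increasing margins and F_Y = F_{Y'},
CoVaR_{α,β}(Y|X) ≤ CoVaR_{α,β}(Y'|X') for all α,β ∈ (0,1) if and only if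
P(Y > VaR_β(Y) | X > VaR_α(X)) ≤ P(Y' > VaR_β(Y') | X' > VaR_α(X')) for all
α,β ∈ (0,1). -/
theorem covar_ordering_iff_cond_exceed_ordering
    {Ω Ω' : Type*} [MeasurableSpace Ω] [MeasurableSpace Ω']
    (μ : Measure Ω) (ν : Measure Ω') [IsProbabilityMeasure μ] [IsProbabilityMeasure ν]
    (X Y : Ω → ℝ) (X' Y' : Ω' → ℝ)
    (hX : Measurable X) (hY : Measurable Y) (hX' : Measurable X') (hY' : Measurable Y')
    (hFXc : Continuous (rvCdf μ X)) (hFXs : StrictMono (rvCdf μ X))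
    (hFX'c : Continuous (rvCdf ν X')) (hFX's : StrictMono (rvCdf ν X'))
    (hFYc : Continuous (rvCdf μ Y)) (hFYs : StrictMono (rvCdf μ Y))
    (hFY'c : Continuous (rvCdf ν Y')) (hFY's : StrictMono (rvCdf ν Y'))
    (hYY' : rvCdf μ Y = rvCdf ν Y') :
    (∀ α ∈ Ioo (0:ℝ) 1, ∀ β ∈ Ioo (0:ℝ) 1, covar μ X Y α β ≤ covar ν X' Y' α β)
      ↔ (∀ α ∈ Ioo (0:ℝ) 1, ∀ β ∈ Ioo (0:ℝ) 1,
          condExceedProb μ X Y α β ≤ condExceedProb ν X' Y' α β) :=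
  covar_ordering_iff_cond_exceed_ordering_general μ ν X Y X' Y' hX hY hX' hY' hFXc hFX'c hFYs hYY'
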